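/- (Green's theorem) Let c : ℕ×ℕ → ℂ be finitely supported and let a := Σ_{(n,m)} c(n,m) (U*)ⁿUᵐ. Then a is scalable, the operator ∂̄(a) = δ̄∘a − J(a)∘δ̄ defined on 𝒟 extends to a bounded operator b on H, and ∫_{D_q} b = (1/(2πi)) ∮_{|ζ|=1} (Σ_{(n,m)} c(n,m) ζ^{m−n}) dζ, where the right-hand side is the contour integral over the positively oriented unit circle of the symbol function σ(a)(ζ) = Σ_{(n,m)} c(n,m) ζ̄ⁿζᵐ (for |ζ| = 1). -/

import Mathlib

open MeasureTheory InnerProductSpace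

noncomputable section

/-- `H = ℓ²(ℕ, ℂ)`. -/
abbrev H : Type := lp (fun _ : ℕ => ℂ) 2

/-- The standard orthonormal basis `e n` of `ℓ²(ℕ, ℂ)`. -/
noncomputable def e (n : ℕ) : H := lp.single 2 n 1

/-- The operator `δ̄`, defined on `𝒟 = range j` by `δ̄(jψ) = q⁻¹(q−1)⁻¹ Uψ`. -/
noncomputable def dbar (q : ℝ) (U j : H →L[ℂ] H) (φ : H) : H :=
  ((q : ℂ)⁻¹ * ((q : ℂ) - 1)⁻¹) • U (Function.invFun (⇑j) φ)

/-- The integral `∫_{D_q} a = (1−q) Σ_k q^k ⟨e_k, a e_k⟩`. -/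
noncomputable def intDq (q : ℝ) (a : H →L[ℂ] H) : ℂ :=
  ((1 - q : ℝ) : ℂ) * ∑' k : ℕ, ((q : ℂ) ^ k) * (inner ℂ (e k) (a (e k)) : ℂ)

open Finset Filter Topology
open scoped InnerProduct

/-!
Write `V = U*`. On the basis one checks `jU = q Uj`, `Vj = q jV` and `UV − VU = (q − 1) j`.
The first two move `j` through a monomial, `VⁿUᵐ j = qⁿ⁻ᵐ j VⁿUᵐ`, so `a` is scalable with
`J(a) = Σ c(n,m) qⁿ⁻ᵐ VⁿUᵐ`; the third gives `UVⁿ − VⁿU = (qⁿ − 1) j Vⁿ⁻¹`, whence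
`∂̄(VⁿUᵐ) = [n]_q Vⁿ⁻¹Uᵐ` with `[n]_q = 1 + q + ⋯ + qⁿ⁻¹`, a bounded operator.
The diagonal of `Vⁿ⁻¹Uᵐ` vanishes unless `n = m + 1`, when its `k`-th entry is
`∏_{i<m} (1 − q^{k+i+1})`; since `(1 − qᵏ) ∏_{i<m} (1 − q^{k+i+1})` telescopes,
`Σ_k qᵏ ∏_{i<m} (1 − q^{k+i+1}) = 1/(1 − q^{m+1})` and `∫_{D_q} ∂̄(Vᵐ⁺¹Uᵐ) = 1`.
Both sides are therefore `Σ_m c(m+1, m)`: on the circle only `ζ⁻¹` has a nonzero integral.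
-/

section QCommutation

variable {R A : Type*} [CommSemiring R] [Semiring A] [Algebra R A] {x y : A} {r : R}

theorem mul_pow_eq_smul_pow_mul (h : x * y = r • (y * x)) (n : ℕ) :
    x * y ^ n = r ^ n • (y ^ n * x) := by
  induction n with
  | zero => simp
  | succ n ih =>
    rw [pow_succ, ← mul_assoc, ih, smul_mul_assoc, mul_assoc, h, mul_smul_comm, smul_smul,
      ← mul_assoc, ← pow_succ, pow_succ r]

theorem pow_mul_eq_smul_mul_pow (h : x * y = r • (y * x)) (n : ℕ) :
    x ^ n * y = r ^ n • (y * x ^ n) := by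
  induction n with
  | zero => simp
  | succ n ih =>
    rw [pow_succ, mul_assoc, h, mul_smul_comm, ← mul_assoc, ih, smul_mul_assoc, smul_smul,
      mul_assoc, ← pow_succ', pow_succ r]

end QCommutation

section OrderedPolynomial

variable {𝕜 A : Type*} [Field 𝕜] [Ring A] [Algebra 𝕜 A] {q : 𝕜} {U V j : A}

theorem pow_mul_pow_mul_eq_smul_mul (hq0 : q ≠ 0) (hjU : j * U = q • (U * j))
    (hVj : V * j = q • (j * V)) (n m : ℕ) :
    V ^ n * U ^ m * j = (q ^ n / q ^ m) • (j * (V ^ n * U ^ m)) := by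
  have hUj : U ^ m * j = (q ^ m)⁻¹ • (j * U ^ m) := by
    rw [mul_pow_eq_smul_pow_mul hjU, inv_smul_smul₀ (pow_ne_zero _ hq0)]
  rw [mul_assoc, hUj, mul_smul_comm, ← mul_assoc, pow_mul_eq_smul_mul_pow hVj, smul_mul_assoc,
    smul_smul, mul_assoc, div_eq_mul_inv, mul_comm (q ^ m)⁻¹]

theorem mul_pow_sub_pow_mul (hVj : V * j = q • (j * V)) (hcomm : U * V - V * U = (q - 1) • j)
    (n : ℕ) : U * V ^ (n + 1) - V ^ (n + 1) * U = (q ^ (n + 1) - 1) • (j * V ^ n) := by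
  induction n with
  | zero => simpa using hcomm
  | succ n ih =>
    have hsplit : U * V ^ (n + 2) - V ^ (n + 2) * U
        = (U * V ^ (n + 1) - V ^ (n + 1) * U) * V + V ^ (n + 1) * (U * V - V * U) := by
      simp only [pow_succ _ (n + 1), sub_mul, mul_sub, ← mul_assoc]
      noncomm_ring
    rw [hsplit, ih, hcomm, mul_smul_comm, pow_mul_eq_smul_mul_pow hVj, smul_mul_assoc,
      mul_assoc, ← pow_succ, smul_smul, ← add_smul]
    congr 1
    ring

theorem smul_commutator_pow_mul_pow_eq (hq0 : q ≠ 0) (hq1 : q ≠ 1) (hjU : j * U = q • (U * j))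
    (hVj : V * j = q • (j * V)) (hcomm : U * V - V * U = (q - 1) • j) (n m : ℕ) :
    (q⁻¹ * (q - 1)⁻¹ * (q ^ n / q ^ m)) • (U * (V ^ n * U ^ m) - V ^ n * U ^ m * U)
      = (∑ i ∈ range n, q ^ i) • (V ^ (n - 1) * U ^ m * j) := by
  cases n with
  | zero => simp [← pow_succ, ← pow_succ']
  | succ n =>
    have hcomm_mono : U * (V ^ (n + 1) * U ^ m) - V ^ (n + 1) * U ^ m * U
        = (q ^ (n + 1) - 1) • (j * (V ^ n * U ^ m)) := by
      rw [mul_assoc (V ^ (n + 1)), ← pow_succ, pow_succ' U m, ← mul_assoc (V ^ (n + 1)) U,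
        ← mul_assoc U, ← sub_mul, mul_pow_sub_pow_mul hVj hcomm, smul_mul_assoc, mul_assoc]
    rw [hcomm_mono, Nat.add_sub_cancel, pow_mul_pow_mul_eq_smul_mul hq0 hjU hVj, smul_smul,
      smul_smul, geom_sum_eq hq1]
    congr 1
    have : q - 1 ≠ 0 := sub_ne_zero.2 hq1
    field_simp
    ring

def orderedPoly (s : Finset (ℕ × ℕ)) (c : ℕ × ℕ → 𝕜) (V U : A) : A :=
  ∑ p ∈ s, c p • (V ^ p.1 * U ^ p.2)

/-- `∂̄(Σ c(n,m) VⁿUᵐ) = Σ c(n,m) [n]_q Vⁿ⁻¹Uᵐ`; the truncated `p.1 - 1` is harmless since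
`[0]_q = 0`. -/
def dbarPoly (q : 𝕜) (s : Finset (ℕ × ℕ)) (c : ℕ × ℕ → 𝕜) (V U : A) : A :=
  ∑ p ∈ s, (c p * ∑ i ∈ range p.1, q ^ i) • (V ^ (p.1 - 1) * U ^ p.2)

variable (s : Finset (ℕ × ℕ)) (c : ℕ × ℕ → 𝕜)

theorem orderedPoly_mul_eq_mul_orderedPoly (hq0 : q ≠ 0) (hjU : j * U = q • (U * j))
    (hVj : V * j = q • (j * V)) :
    orderedPoly s c V U * j = j * orderedPoly s (fun p => c p * (q ^ p.1 / q ^ p.2)) V U := by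
  simp only [orderedPoly, sum_mul, mul_sum, smul_mul_assoc, mul_smul_comm]
  refine sum_congr rfl fun p _ => ?_
  rw [pow_mul_pow_mul_eq_smul_mul hq0 hjU hVj, smul_smul]

theorem dbarPoly_mul_eq (hq0 : q ≠ 0) (hq1 : q ≠ 1) (hjU : j * U = q • (U * j))
    (hVj : V * j = q • (j * V)) (hcomm : U * V - V * U = (q - 1) • j) :
    dbarPoly q s c V U * j = (q⁻¹ * (q - 1)⁻¹) •
      (U * orderedPoly s (fun p => c p * (q ^ p.1 / q ^ p.2)) V U
        - orderedPoly s (fun p => c p * (q ^ p.1 / q ^ p.2)) V U * U) := by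
  simp only [dbarPoly, orderedPoly, sum_mul, mul_sum, ← sum_sub_distrib, smul_sum,
    smul_mul_assoc, mul_smul_comm, ← smul_sub]
  refine sum_congr rfl fun p _ => ?_
  rw [← mul_sum, mul_smul (c p), ← smul_commutator_pow_mul_pow_eq hq0 hq1 hjU hVj hcomm, smul_smul,
    smul_smul]
  congr 1
  ring

end OrderedPolynomial

theorem hasSum_pow_mul_prod_one_sub_pow {q : ℝ} (hq0 : 0 ≤ q) (hq1 : q < 1) (m : ℕ) :
    HasSum (fun k => q ^ k * ∏ i ∈ range m, (1 - q ^ (k + i + 1))) (1 - q ^ (m + 1))⁻¹ := by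
  set P : ℕ → ℝ := fun k => ∏ i ∈ range m, (1 - q ^ (k + i + 1))
  have hm : 1 - q ^ (m + 1) ≠ 0 := (sub_pos.2 (pow_lt_one₀ hq0 hq1 m.succ_ne_zero)).ne'
  have hstep : ∀ k, (1 - q ^ (k + 1)) * P (k + 1) - (1 - q ^ k) * P k
      = (1 - q ^ (m + 1)) * (q ^ k * P k) := fun k => by
    have hshift : (1 - q ^ (k + 1)) * P (k + 1) = P k * (1 - q ^ (k + m + 1)) := by
      have h := prod_range_succ' (fun i => 1 - q ^ (k + i + 1)) m
      rw [prod_range_succ] at h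
      rw [h, mul_comm]
      exact congrArg₂ _ (prod_congr rfl fun i _ => by ring_nf) rfl
    rw [hshift]
    ring
  have hpartial : ∀ N, ∑ k ∈ range N, q ^ k * P k = (1 - q ^ (m + 1))⁻¹ * ((1 - q ^ N) * P N) :=
    fun N => by
      rw [eq_inv_mul_iff_mul_eq₀ hm, mul_sum, ← sum_congr rfl fun k _ => hstep k,
        sum_range_sub (fun k => (1 - q ^ k) * P k), pow_zero, sub_self, zero_mul, sub_zero]
  have hlim : Tendsto (fun N => (1 - q ^ N) * P N) atTop (𝓝 1) := by
    have hpow := tendsto_pow_atTop_nhds_zero_of_lt_one hq0 hq1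
    have hP : Tendsto P atTop (𝓝 (∏ i ∈ range m, (1 - 0))) :=
      tendsto_finsetProd _ fun i _ => (hpow.comp (tendsto_add_atTop_nat (i + 1))).const_sub 1
    simpa using (hpow.const_sub 1).mul hP
  rw [hasSum_iff_tendsto_nat_of_nonneg fun k => mul_nonneg (pow_nonneg hq0 k)
    (prod_nonneg fun i _ => sub_nonneg.2 (pow_le_one₀ hq0 hq1.le))]
  have h := (hlim.const_mul (1 - q ^ (m + 1))⁻¹).congr fun N => (hpartial N).symm
  rwa [mul_one] at h

theorem circleIntegral_sum_mul_zpow {ι : Type*} (s : Finset ι) (c : ι → ℂ) (d : ι → ℤ) :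
    (∮ ζ in C(0, 1), ∑ i ∈ s, c i * ζ ^ d i) =
      2 * Real.pi * Complex.I * ∑ i ∈ s with d i = -1, c i := by
  have hint : ∀ n : ℤ, CircleIntegrable (fun ζ : ℂ => ζ ^ n) 0 1 := fun n => by
    simpa using (circleIntegrable_sub_zpow_iff (c := 0) (w := 0) (R := 1) (n := n)).2 (by simp)
  rw [circleIntegral.integral_fun_sum (f := fun i ζ => c i * ζ ^ d i)
    fun i _ => (hint (d i)).const_smul (a := c i), sum_filter, mul_sum]
  refine sum_congr rfl fun i _ => ?_
  rw [circleIntegral.integral_const_mul]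
  split_ifs with h
  · simpa [h, zpow_neg_one, mul_comm] using
      congrArg (c i * ·) (circleIntegral.integral_sub_center_inv (0 : ℂ) one_ne_zero)
  · simpa using congrArg (c i * ·) (circleIntegral.integral_sub_zpow_of_ne h 0 0 1)

theorem inner_e_left (i : ℕ) (f : H) : ⟪e i, f⟫_ℂ = f i := by
  simp [e, lp.inner_single_left]

theorem inner_e_e (i n : ℕ) : ⟪e i, e n⟫_ℂ = if i = n then 1 else 0 := by
  rw [inner_e_left]
  simp [e, lp.single_apply, Pi.single_apply]

theorem ext_inner_e {x y : H} (h : ∀ i, ⟪e i, x⟫_ℂ = ⟪e i, y⟫_ℂ) : x = y :=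
  lp.ext <| funext fun i => by simpa only [inner_e_left] using h i

theorem ext_e {S T : H →L[ℂ] H} (h : ∀ n, S (e n) = T (e n)) : S = T :=
  lp.ext_continuousLinearMap ENNReal.ofNat_ne_top fun n =>
    ContinuousLinearMap.ext_ring <| by simpa [e] using h n

section WeightedShift

variable {w : ℕ → ℝ} {U : H →L[ℂ] H} (hU : ∀ n, U (e n) = (w n : ℂ) • e (n + 1))
include hU

theorem adjoint_apply_e_zero : (U†) (e 0) = 0 :=
  ext_inner_e fun i => by
    rw [ContinuousLinearMap.adjoint_inner_right, hU, inner_smul_left, inner_e_e]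
    simp

theorem adjoint_apply_e_succ (n : ℕ) : (U†) (e (n + 1)) = (w n : ℂ) • e n :=
  ext_inner_e fun i => by
    rw [ContinuousLinearMap.adjoint_inner_right, hU, inner_smul_left, inner_smul_right, inner_e_e,
      inner_e_e, Complex.conj_ofReal]
    by_cases h : i = n <;> simp [h]

theorem pow_apply_e (m k : ℕ) :
    (U ^ m) (e k) = ((∏ i ∈ range m, w (k + i) : ℝ) : ℂ) • e (k + m) := by
  induction m with
  | zero => simp
  | succ m ih =>
    rw [pow_succ', mul_apply_eq_comp, ih, map_smul, hU, smul_smul, prod_range_succ,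
      Complex.ofReal_mul, mul_comm, add_assoc]

theorem inner_e_adjoint_pow_mul_pow_apply_e (n m k : ℕ) :
    ⟪e k, (U† ^ n * U ^ m) (e k)⟫_ℂ =
      if n = m then ((∏ i ∈ range m, w (k + i) ^ 2 : ℝ) : ℂ) else 0 := by
  rw [← ContinuousLinearMap.star_eq_adjoint, ← star_pow, ContinuousLinearMap.star_eq_adjoint,
    mul_apply_eq_comp, ContinuousLinearMap.adjoint_inner_right, pow_apply_e hU,
    pow_apply_e hU, inner_smul_left, inner_smul_right, inner_e_e]
  split_ifs with hkm hnm hnm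
  · subst hnm; simp [sq, prod_mul_distrib]
  · omega
  · omega
  · simp

variable {q : ℝ} {j : H →L[ℂ] H}

theorem j_mul_eq_smul_mul_j (hj : ∀ n, j (e n) = (q : ℂ) ^ n • e n) :
    j * U = (q : ℂ) • (U * j) :=
  ext_e fun n => by
    simp only [mul_apply_eq_comp, smul_apply, hU, hj, map_smul, smul_smul]
    ring_nf

theorem adjoint_mul_j_eq_smul_j_mul (hj : ∀ n, j (e n) = (q : ℂ) ^ n • e n) :
    U† * j = (q : ℂ) • (j * U†) :=
  ext_e fun n => by
    rcases n with _ | n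
    · simp only [mul_apply_eq_comp, smul_apply, hj, pow_zero, one_smul, adjoint_apply_e_zero hU,
        map_zero, smul_zero]
    · simp only [mul_apply_eq_comp, smul_apply, hj, map_smul, adjoint_apply_e_succ hU, smul_smul]
      ring_nf

theorem mul_adjoint_sub_adjoint_mul (hj : ∀ n, j (e n) = (q : ℂ) ^ n • e n)
    (hw : ∀ n, w n ^ 2 = 1 - q ^ (n + 1)) :
    U * U† - U† * U = ((q : ℂ) - 1) • j :=
  ext_e fun n => by
    have hw' : ∀ n, (w n : ℂ) * w n = 1 - (q : ℂ) ^ (n + 1) := fun n => by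
      exact_mod_cast (sq (w n)).symm.trans (hw n)
    rcases n with _ | n
    · simp only [sub_apply, mul_apply_eq_comp, smul_apply, adjoint_apply_e_zero hU, hU, hj,
        map_smul, map_zero, adjoint_apply_e_succ hU, smul_smul, hw']
      module
    · simp only [sub_apply, mul_apply_eq_comp, smul_apply, hU, hj, map_smul,
        adjoint_apply_e_succ hU, smul_smul, hw']
      module

theorem hasSum_pow_mul_inner_e_adjoint_pow_mul_pow (hq0 : 0 ≤ q) (hq1 : q < 1)
    (hw : ∀ n, w n ^ 2 = 1 - q ^ (n + 1)) (n m : ℕ) :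
    HasSum (fun k => (q : ℂ) ^ k * ⟪e k, (U† ^ n * U ^ m) (e k)⟫_ℂ)
      (if n = m then (((1 - q ^ (m + 1))⁻¹ : ℝ) : ℂ) else 0) := by
  simp only [inner_e_adjoint_pow_mul_pow_apply_e hU, hw]
  split_ifs
  · exact_mod_cast Complex.hasSum_ofReal.2 (hasSum_pow_mul_prod_one_sub_pow hq0 hq1 m)
  · simp

theorem intDq_dbarPoly (hq0 : 0 ≤ q) (hq1 : q < 1) (hw : ∀ n, w n ^ 2 = 1 - q ^ (n + 1))
    (s : Finset (ℕ × ℕ)) (c : ℕ × ℕ → ℂ) :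
    intDq q (dbarPoly (q : ℂ) s c (U†) U) = ∑ p ∈ s with p.1 = p.2 + 1, c p := by
  have hsum : HasSum (fun k => (q : ℂ) ^ k * ⟪e k, dbarPoly (q : ℂ) s c (U†) U (e k)⟫_ℂ)
      (∑ p ∈ s, (c p * ∑ i ∈ range p.1, (q : ℂ) ^ i) *
        if p.1 - 1 = p.2 then (((1 - q ^ (p.2 + 1))⁻¹ : ℝ) : ℂ) else 0) := by
    refine (hasSum_sum fun p (_ : p ∈ s) => (hasSum_pow_mul_inner_e_adjoint_pow_mul_pow hU hq0
      hq1 hw (p.1 - 1) p.2).mul_left (c p * ∑ i ∈ range p.1, (q : ℂ) ^ i)).congr_fun fun k => ?_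
    simp only [dbarPoly, _root_.sum_apply, smul_apply, inner_sum, inner_smul_right, mul_sum]
    exact sum_congr rfl fun p _ => by ring
  rw [intDq, hsum.tsum_eq, mul_sum, sum_filter]
  refine sum_congr rfl fun p _ => ?_
  obtain ⟨_ | n, m⟩ := p
  · simp
  · simp only [Nat.add_sub_cancel, Nat.add_right_cancel_iff]
    split_ifs with h
    · subst h
      have hne : (1 : ℂ) - (q : ℂ) ^ (n + 1) ≠ 0 := by
        exact_mod_cast (sub_pos.2 (pow_lt_one₀ hq0 hq1 n.succ_ne_zero)).ne'
      push_cast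
      calc _ = c (n + 1, n) * ((1 - q) * ∑ i ∈ range (n + 1), (q : ℂ) ^ i)
            * (1 - (q : ℂ) ^ (n + 1))⁻¹ := by ring
        _ = c (n + 1, n) := by rw [mul_neg_geom_sum, mul_assoc, mul_inv_cancel₀ hne, mul_one]
    · simp

end WeightedShift

theorem dbar_apply_apply {q : ℝ} {U j : H →L[ℂ] H} (hj : Function.Injective j) (ψ : H) :
    dbar q U j (j ψ) = ((q : ℂ)⁻¹ * ((q : ℂ) - 1)⁻¹) • U ψ := by
  rw [dbar, Function.leftInverse_invFun hj ψ]

/-- (Green's theorem) For a noncommutative polynomial `a = Σ c(n,m) (U*)ⁿUᵐ`, `a` is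
scalable, `∂̄(a)` extends to a bounded operator `b`, and `∫_{D_q} b` equals the contour
integral `(2πi)⁻¹ ∮_{|ζ|=1} σ(a)(ζ) dζ` of the symbol `σ(a)(ζ) = Σ c(n,m) ζ^{m−n}`. -/
theorem stmt12 (q : ℝ) (hq0 : 0 < q) (hq1 : q < 1)
    (U : H →L[ℂ] H)
    (hU : ∀ n : ℕ, U (e n) = (Real.sqrt (1 - q ^ (n + 1)) : ℂ) • e (n + 1))
    (j : H →L[ℂ] H)
    (hj : ∀ n : ℕ, j (e n) = ((q : ℂ) ^ n) • e n)
    (hjinj : Function.Injective (⇑j))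
    (c : ℕ × ℕ →₀ ℂ)
    (a : H →L[ℂ] H)
    (ha : a = ∑ p ∈ c.support, c p • ((ContinuousLinearMap.adjoint U) ^ p.1 * U ^ p.2)) :
    ∃ Ja b : H →L[ℂ] H,
      a.comp j = j.comp Ja ∧
      (∀ φ ∈ Set.range (⇑j), b φ = dbar q U j (a φ) - Ja (dbar q U j φ)) ∧
      intDq q b = (2 * Real.pi * Complex.I)⁻¹ *
        (∮ ζ in C((0 : ℂ), 1), ∑ p ∈ c.support, c p * ζ ^ ((p.2 : ℤ) - p.1)) := by
  have hw : ∀ n : ℕ, Real.sqrt (1 - q ^ (n + 1)) ^ 2 = 1 - q ^ (n + 1) := fun n =>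
    Real.sq_sqrt (sub_nonneg.2 (pow_le_one₀ hq0.le hq1.le))
  have hq : (q : ℂ) ≠ 0 := Complex.ofReal_ne_zero.2 hq0.ne'
  have hq' : (q : ℂ) ≠ 1 := by exact_mod_cast hq1.ne
  have hjU := j_mul_eq_smul_mul_j hU hj
  have hVj := adjoint_mul_j_eq_smul_j_mul hU hj
  have hcomm := mul_adjoint_sub_adjoint_mul hU hj hw
  set Ja := orderedPoly c.support (fun p => c p * ((q : ℂ) ^ p.1 / (q : ℂ) ^ p.2)) (U†) U
  have haJ : a * j = j * Ja := ha ▸ orderedPoly_mul_eq_mul_orderedPoly c.support c hq hjU hVj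
  have hbJ := dbarPoly_mul_eq c.support c hq hq' hjU hVj hcomm
  refine ⟨Ja, dbarPoly (q : ℂ) c.support c (U†) U, haJ, ?_, ?_⟩
  · rintro _ ⟨ψ, rfl⟩
    rw [← mul_apply_eq_comp a, haJ, mul_apply_eq_comp, dbar_apply_apply hjinj,
      dbar_apply_apply hjinj, map_smul, ← smul_sub, ← mul_apply_eq_comp, hbJ]
    rfl
  · rw [intDq_dbarPoly hU hq0.le hq1 hw, circleIntegral_sum_mul_zpow, ← mul_assoc,
      inv_mul_cancel₀ (by simp [Real.pi_ne_zero]), one_mul]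
    exact sum_congr (filter_congr fun p _ => by omega) fun _ _ => rfl

end
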